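/- Let D be a nonempty convex open set in ℝ^d, let w : [0,∞) → ℝ^d be right-continuous with left limits with w(0) ∈ D̄, and let (X, φ) be a solution of the Skorohod equation X = w + φ. Then for all 0 ≤ s ≤ t: |X(t) − X(s)|² ≤ |w(t) − w(s)|² + 2 ∫_{(s,t]} ⟨w(t) − w(τ), dφ(τ)⟩. -/

import Mathlib

open MeasureTheory Set Filter Topology
open scoped RealInnerProductSpace

noncomputable section

abbrev Euc (d : ℕ) := EuclideanSpace ℝ (Fin d)

/-- Measure data representing the Lebesgue–Stieltjes measures `dφ` (componentwise, as a
difference of locally finite nonnegative measures) and `d|φ|` (the total variation measure)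
of a function `φ : [0,∞) → ℝ^d` of locally bounded variation. -/
structure BVMeasureData (d : ℕ) (φ : ℝ → Euc d) where
  pos : Fin d → Measure ℝ
  neg : Fin d → Measure ℝ
  var : Measure ℝ
  pos_fin : ∀ i : Fin d, ∀ t : ℝ, pos i (Icc 0 t) < ⊤
  neg_fin : ∀ i : Fin d, ∀ t : ℝ, neg i (Icc 0 t) < ⊤
  increments : ∀ i : Fin d, ∀ s t : ℝ, 0 ≤ s → s ≤ t →
    (pos i (Ioc s t)).toReal - (neg i (Ioc s t)).toReal = φ t i - φ s i
  var_eq : ∀ s t : ℝ, 0 ≤ s → s ≤ t → var (Ioc s t) = eVariationOn φ (Icc s t)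

/-- The Stieltjes integral `∫_{(s,t]} ⟨f(τ), dφ(τ)⟩`. -/
def BVMeasureData.pairing {d : ℕ} {φ : ℝ → Euc d} (M : BVMeasureData d φ)
    (f : ℝ → Euc d) (s t : ℝ) : ℝ :=
  ∑ i : Fin d, ((∫ τ in Ioc s t, f τ i ∂(M.pos i)) - ∫ τ in Ioc s t, f τ i ∂(M.neg i))

/-- `f` is right-continuous at every `t ≥ 0`. -/
def RightContinuousOnNonneg {E : Type*} [TopologicalSpace E] (f : ℝ → E) : Prop :=
  ∀ t : ℝ, 0 ≤ t → ContinuousWithinAt f (Ici t) t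

/-- `f` has left limits at every `t > 0`. -/
def HasLeftLimitsOnPos {E : Type*} [TopologicalSpace E] (f : ℝ → E) : Prop :=
  ∀ t : ℝ, 0 < t → ∃ L, Tendsto f (𝓝[<] t) (𝓝 L)

/-- `φ` is associated with `X` (relative to the convex domain `D`):
`φ` is rcll of locally bounded variation with `φ(0) = 0`, the measure `d|φ|` does not
charge `{t ≥ 0 : X(t) ∈ D}`, and `∫_{(s,t]} ⟨η(τ) − X(τ), dφ(τ)⟩ ≥ 0` for every
continuous `η : [0,∞) → closure D`. -/
structure IsAssociated {d : ℕ} (D : Set (Euc d)) (X : ℝ → Euc d) (φ : ℝ → Euc d)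
    (M : BVMeasureData d φ) : Prop where
  rightCont : RightContinuousOnNonneg φ
  leftLim : HasLeftLimitsOnPos φ
  bv : ∀ t : ℝ, 0 ≤ t → eVariationOn φ (Icc 0 t) < ⊤
  init : φ 0 = 0
  carried : M.var {t : ℝ | 0 ≤ t ∧ X t ∈ D} = 0
  normal : ∀ η : ℝ → Euc d, Continuous η → (∀ t : ℝ, 0 ≤ t → η t ∈ closure D) →
    ∀ s t : ℝ, 0 ≤ s → s ≤ t → 0 ≤ M.pairing (fun τ => η τ - X τ) s t

/-- `(X, φ)` (with measure data `M` for `φ`) solves the Skorohod equation `X = w + φ`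
for the domain `D`. -/
structure IsSkorohodSolution {d : ℕ} (D : Set (Euc d)) (w X φ : ℝ → Euc d)
    (M : BVMeasureData d φ) : Prop where
  rightCont : RightContinuousOnNonneg X
  leftLim : HasLeftLimitsOnPos X
  mem : ∀ t : ℝ, 0 ≤ t → X t ∈ closure D
  eqn : ∀ t : ℝ, 0 ≤ t → X t = w t + φ t
  assoc : IsAssociated D X φ M

/-!
Write `Δw = w t - w s` and `Δφ = φ t - φ s`. On `(s, t]` we have
`w t - w τ = (X s - X τ) + Δw + (φ τ - φ s)`, so the Stieltjes integral on the right splits as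
`∫⟨X s - X, dφ⟩ + ⟨Δw, Δφ⟩ + ∫⟨φ - φ s, dφ⟩`. The first term is nonnegative by the normality
condition applied to the constant `η = X s`. For the last one, evaluating the integrand at right
end points of a partition gives `∑ ⟨a_{k+1}, a_{k+1} - a_k⟩ ≥ ‖a_n - a_0‖² / 2`
(with `a_k = φ τ_k - φ s`, `a_0 = 0`), and these Riemann sums converge to the integral by dominated
convergence because `φ` is right-continuous and bounded; hence `∫⟨φ - φ s, dφ⟩ ≥ ‖Δφ‖² / 2`.
Expanding `‖X t - X s‖² = ‖Δw + Δφ‖²` concludes.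
-/

open Bornology

section RightContinuous

variable {E : Type*} {f : ℝ → E} {s t : ℝ}

theorem isBounded_image_Icc_of_rightCont_of_leftLim [PseudoMetricSpace E]
    (hrc : ∀ τ ∈ Icc s t, ContinuousWithinAt f (Ici τ) τ)
    (hll : ∀ τ ∈ Ioc s t, ∃ L, Tendsto f (𝓝[<] τ) (𝓝 L)) :
    IsBounded (f '' Icc s t) := by
  refine isCompact_Icc.induction_on (p := fun A => IsBounded (f '' A)) (by simp)
    (fun A B hAB hB => hB.subset (image_mono hAB))
    (fun A B hA hB => by rw [image_union]; exact hA.union hB) fun τ hτ => ?_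
  obtain ⟨R, hR, hRb⟩ := Metric.exists_isBounded_image_of_tendsto (hrc τ hτ)
  rcases hτ.1.eq_or_lt with rfl | hsτ
  · exact ⟨R, nhdsWithin_mono _ Icc_subset_Ici_self hR, hRb⟩
  · obtain ⟨L, hL⟩ := hll τ ⟨hsτ, hτ.2⟩
    obtain ⟨Q, hQ, hQb⟩ := Metric.exists_isBounded_image_of_tendsto hL
    refine ⟨Q ∪ R, mem_nhdsWithin_of_mem_nhds ?_, by rw [image_union]; exact hQb.union hRb⟩
    rw [← nhdsLT_sup_nhdsGE]
    exact union_mem_sup hQ hR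

theorem RightContinuousOnNonneg.isBounded_image_Icc [PseudoMetricSpace E]
    (hrc : RightContinuousOnNonneg f) (hll : HasLeftLimitsOnPos f) (hs : 0 ≤ s) :
    IsBounded (f '' Icc s t) :=
  isBounded_image_Icc_of_rightCont_of_leftLim (fun τ hτ => hrc τ (hs.trans hτ.1))
    fun τ hτ => hll τ (hs.trans_lt hτ.1)

end RightContinuous

/-- The right end point of the cell `(s + h k, s + h (k + 1)]` of the grid `s + hℤ`
containing `τ`. -/
def ceilGrid (s h τ : ℝ) : ℝ := s + h * ⌈(τ - s) / h⌉

section CeilGrid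

variable {s h τ : ℝ}

theorem le_ceilGrid (hh : 0 < h) : τ ≤ ceilGrid s h τ := by
  have := (div_le_iff₀' hh).1 (Int.le_ceil ((τ - s) / h))
  rw [ceilGrid]
  linarith

theorem ceilGrid_lt (hh : 0 < h) : ceilGrid s h τ < τ + h := by
  have := mul_lt_mul_of_pos_left (Int.ceil_lt_add_one ((τ - s) / h)) hh
  rw [mul_add, mul_div_cancel₀ _ hh.ne'] at this
  rw [ceilGrid]
  linarith

theorem ceilGrid_le {m : ℕ} (hh : 0 < h) (hτ : τ ≤ s + h * m) : ceilGrid s h τ ≤ s + h * m := by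
  have : ⌈(τ - s) / h⌉ ≤ m := Int.ceil_le.2 (by rw [div_le_iff₀' hh]; push_cast; linarith)
  rw [ceilGrid]
  gcongr
  exact_mod_cast this

theorem ceilGrid_eq {k : ℕ} (hh : 0 < h) (hτ : τ ∈ Ioc (s + h * k) (s + h * (k + 1))) :
    ceilGrid s h τ = s + h * (k + 1) := by
  have : ⌈(τ - s) / h⌉ = k + 1 := by
    rw [Int.ceil_eq_iff]
    push_cast
    constructor
    · rw [lt_div_iff₀' hh]; linarith [hτ.1]
    · rw [div_le_iff₀' hh]; linarith [hτ.2]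
  rw [ceilGrid, this]
  push_cast
  rfl

theorem measurable_comp_ceilGrid {E : Type*} [MeasurableSpace E] (f : ℝ → E) (s h : ℝ) :
    Measurable fun τ => f (ceilGrid s h τ) :=
  (measurable_of_countable fun z : ℤ => f (s + h * z)).comp
    (Int.measurable_ceil.comp ((measurable_id.sub_const s).div_const h))

theorem tendsto_ceilGrid {h : ℕ → ℝ} (hh : Tendsto h atTop (𝓝[>] 0)) (s τ : ℝ) :
    Tendsto (fun n => ceilGrid s (h n) τ) atTop (𝓝[≥] τ) := by
  have hpos : ∀ᶠ n in atTop, 0 < h n := hh (self_mem_nhdsWithin)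
  refine tendsto_nhdsWithin_of_tendsto_nhds_of_eventually_within _ ?_
    (hpos.mono fun n hn => le_ceilGrid hn)
  have hupper : Tendsto (fun n => τ + h n) atTop (𝓝 τ) := by
    simpa using tendsto_const_nhds.add (tendsto_nhds_of_tendsto_nhdsWithin hh)
  exact tendsto_of_tendsto_of_tendsto_of_le_of_le' tendsto_const_nhds hupper
    (hpos.mono fun n hn => le_ceilGrid hn) (hpos.mono fun n hn => (ceilGrid_lt hn).le)

end CeilGrid

theorem tendsto_div_add_one_nhdsGT {c : ℝ} (hc : 0 < c) :
    Tendsto (fun n : ℕ => c / (n + 1)) atTop (𝓝[>] 0) := by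
  refine tendsto_nhdsWithin_iff.2 ⟨?_, Eventually.of_forall fun n => mem_Ioi.2 (by positivity)⟩
  simpa [div_eq_mul_inv] using (tendsto_one_div_add_atTop_nhds_zero_nat).const_mul c

section Integrability

variable {E : Type*} {f : ℝ → E} {A : Set ℝ}

theorem aestronglyMeasurable_restrict_of_rightCont [TopologicalSpace E]
    [TopologicalSpace.PseudoMetrizableSpace E] [SecondCountableTopology E] [MeasurableSpace E]
    [OpensMeasurableSpace E] (hrc : ∀ τ ∈ A, ContinuousWithinAt f (Ici τ) τ) (hA : MeasurableSet A)
    (μ : Measure ℝ) : AEStronglyMeasurable f (μ.restrict A) := by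
  refine aestronglyMeasurable_of_tendsto_ae atTop
    (fun n : ℕ => (measurable_comp_ceilGrid f 0 (1 / (n + 1))).aestronglyMeasurable) ?_
  filter_upwards [ae_restrict_mem hA] with τ hτ
  exact (hrc τ hτ).tendsto.comp (tendsto_ceilGrid (tendsto_div_add_one_nhdsGT one_pos) 0 τ)

theorem integrableOn_of_rightCont [NormedAddCommGroup E] [SecondCountableTopology E]
    [MeasurableSpace E] [BorelSpace E] (hrc : ∀ τ ∈ A, ContinuousWithinAt f (Ici τ) τ)
    (hbdd : IsBounded (f '' A)) (hA : MeasurableSet A) {μ : Measure ℝ} (hμ : μ A ≠ ⊤) :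
    IntegrableOn f A μ := by
  obtain ⟨C, hC⟩ := isBounded_iff_forall_norm_le.1 hbdd
  have : IsFiniteMeasure (μ.restrict A) := isFiniteMeasure_restrict.2 hμ
  refine Integrable.of_bound (aestronglyMeasurable_restrict_of_rightCont hrc hA μ) C ?_
  filter_upwards [ae_restrict_mem hA] with τ hτ
  exact hC _ (mem_image_of_mem f hτ)

theorem sum_setIntegral_Ioc_adjacent {g : ℝ → ℝ} {μ : Measure ℝ} {a : ℕ → ℝ} (ha : Monotone a)
    {m : ℕ} (hg : ∀ k < m, IntegrableOn g (Ioc (a k) (a (k + 1))) μ) :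
    ∑ k ∈ Finset.range m, ∫ τ in Ioc (a k) (a (k + 1)), g τ ∂μ =
      ∫ τ in Ioc (a 0) (a m), g τ ∂μ := by
  have hstep : ∀ k, a k ≤ a (k + 1) := fun k => ha k.le_succ
  rw [← intervalIntegral.integral_of_le (ha m.zero_le),
    ← intervalIntegral.sum_integral_adjacent_intervals fun k hk =>
      (intervalIntegrable_iff_integrableOn_Ioc_of_le (hstep k)).2 (hg k hk)]
  exact Finset.sum_congr rfl fun k _ => (intervalIntegral.integral_of_le (hstep k)).symm

end Integrability

theorem norm_sq_sub_norm_sq_le_two_mul_sum_inner {F : Type*} [NormedAddCommGroup F]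
    [InnerProductSpace ℝ F] (a : ℕ → F) (m : ℕ) :
    ‖a m‖ ^ 2 - ‖a 0‖ ^ 2 ≤ 2 * ∑ k ∈ Finset.range m, ⟪a (k + 1), a (k + 1) - a k⟫ := by
  rw [← Finset.sum_range_sub (fun k => ‖a k‖ ^ 2), Finset.mul_sum]
  refine Finset.sum_le_sum fun k _ => ?_
  have hexpand : ‖a (k + 1) - a k‖ ^ 2 = ‖a (k + 1)‖ ^ 2 - 2 * ⟪a (k + 1), a k⟫ + ‖a k‖ ^ 2 :=
    norm_sub_sq_real _ _
  rw [inner_sub_right, real_inner_self_eq_norm_sq]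
  linarith [sq_nonneg ‖a (k + 1) - a k‖]

namespace BVMeasureData

variable {d : ℕ} {φ : ℝ → Euc d} (M : BVMeasureData d φ) {f g : ℝ → Euc d} {s t : ℝ}

theorem pos_Ioc_ne_top (hs : 0 ≤ s) (i : Fin d) : M.pos i (Ioc s t) ≠ ⊤ :=
  ((measure_mono (Ioc_subset_Icc_self.trans (Icc_subset_Icc_left hs))).trans_lt
    (M.pos_fin i t)).ne

theorem neg_Ioc_ne_top (hs : 0 ≤ s) (i : Fin d) : M.neg i (Ioc s t) ≠ ⊤ :=
  ((measure_mono (Ioc_subset_Icc_self.trans (Icc_subset_Icc_left hs))).trans_lt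
    (M.neg_fin i t)).ne

def PairingIntegrable (f : ℝ → Euc d) (s t : ℝ) : Prop :=
  ∀ i, IntegrableOn (fun τ => f τ i) (Ioc s t) (M.pos i) ∧
    IntegrableOn (fun τ => f τ i) (Ioc s t) (M.neg i)

theorem pairingIntegrable_const (hs : 0 ≤ s) (c : Euc d) : M.PairingIntegrable (fun _ => c) s t :=
  fun i => ⟨integrableOn_const (M.pos_Ioc_ne_top hs i), integrableOn_const (M.neg_Ioc_ne_top hs i)⟩

theorem pairingIntegrable_of_rightCont_of_leftLim (hrc : RightContinuousOnNonneg f)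
    (hll : HasLeftLimitsOnPos f) (hs : 0 ≤ s) : M.PairingIntegrable f s t := by
  have hint : ∀ μ : Measure ℝ, μ (Ioc s t) ≠ ⊤ → ∀ i, IntegrableOn (fun τ => f τ i) (Ioc s t) μ :=
    fun μ hμ i => (EuclideanSpace.proj (𝕜 := ℝ) i).integrable_comp <|
      integrableOn_of_rightCont (fun τ hτ => hrc τ (hs.trans hτ.1.le))
        ((hrc.isBounded_image_Icc hll hs).subset (image_mono Ioc_subset_Icc_self))
        measurableSet_Ioc hμ
  exact fun i => ⟨hint _ (M.pos_Ioc_ne_top hs i) i, hint _ (M.neg_Ioc_ne_top hs i) i⟩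

namespace PairingIntegrable

variable {M}

theorem add (hf : M.PairingIntegrable f s t) (hg : M.PairingIntegrable g s t) :
    M.PairingIntegrable (fun τ => f τ + g τ) s t :=
  fun i => ⟨(hf i).1.add (hg i).1, (hf i).2.add (hg i).2⟩

theorem sub (hf : M.PairingIntegrable f s t) (hg : M.PairingIntegrable g s t) :
    M.PairingIntegrable (fun τ => f τ - g τ) s t :=
  fun i => ⟨(hf i).1.sub (hg i).1, (hf i).2.sub (hg i).2⟩

theorem congr (hf : M.PairingIntegrable f s t) (hfg : EqOn f g (Ioc s t)) :
    M.PairingIntegrable g s t :=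
  have hfg' : ∀ i, EqOn (fun τ => f τ i) (fun τ => g τ i) (Ioc s t) :=
    fun i τ hτ => by simp only [hfg hτ]
  fun i => ⟨(hf i).1.congr_fun (hfg' i) measurableSet_Ioc,
    (hf i).2.congr_fun (hfg' i) measurableSet_Ioc⟩

end PairingIntegrable

theorem pairing_congr (hfg : EqOn f g (Ioc s t)) : M.pairing f s t = M.pairing g s t := by
  unfold pairing
  refine Finset.sum_congr rfl fun i _ => ?_
  rw [setIntegral_congr_fun measurableSet_Ioc fun τ hτ => by rw [hfg hτ],
    setIntegral_congr_fun measurableSet_Ioc (μ := M.neg i) fun τ hτ => by rw [hfg hτ]]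

theorem pairing_add (hf : M.PairingIntegrable f s t) (hg : M.PairingIntegrable g s t) :
    M.pairing (fun τ => f τ + g τ) s t = M.pairing f s t + M.pairing g s t := by
  unfold pairing
  rw [← Finset.sum_add_distrib]
  refine Finset.sum_congr rfl fun i _ => ?_
  simp only [PiLp.add_apply]
  rw [integral_add (hf i).1 (hg i).1, integral_add (hf i).2 (hg i).2]
  ring

theorem pairing_const (hs : 0 ≤ s) (hst : s ≤ t) (c : Euc d) :
    M.pairing (fun _ => c) s t = ⟪c, φ t - φ s⟫ := by
  simp only [pairing, setIntegral_const, smul_eq_mul, measureReal_def, PiLp.inner_apply,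
    PiLp.sub_apply, ← M.increments _ s t hs hst]
  refine Finset.sum_congr rfl fun i _ => ?_
  simp only [RCLike.inner_apply, conj_trivial]
  ring

theorem sum_pairing_adjacent {a : ℕ → ℝ} (ha : Monotone a) {m : ℕ}
    (hf : ∀ k < m, M.PairingIntegrable f (a k) (a (k + 1))) :
    ∑ k ∈ Finset.range m, M.pairing f (a k) (a (k + 1)) = M.pairing f (a 0) (a m) := by
  unfold pairing
  rw [Finset.sum_comm]
  refine Finset.sum_congr rfl fun i _ => ?_
  rw [Finset.sum_sub_distrib, sum_setIntegral_Ioc_adjacent ha fun k hk => (hf k hk i).1,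
    sum_setIntegral_Ioc_adjacent ha fun k hk => (hf k hk i).2]

theorem pairing_comp_ceilGrid (hs : 0 ≤ s) {h : ℝ} (hh : 0 < h) (g : ℝ → Euc d) (m : ℕ) :
    M.pairing (fun τ => g (ceilGrid s h τ)) s (s + h * m) =
      ∑ k ∈ Finset.range m, ⟪g (s + h * (k + 1)), φ (s + h * (k + 1)) - φ (s + h * k)⟫ := by
  have hmono : Monotone fun k : ℕ => s + h * k := fun k l hkl => by
    dsimp only
    gcongr
  have hcell : ∀ k : ℕ, EqOn (fun _ => g (s + h * (k + 1))) (fun τ => g (ceilGrid s h τ))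
      (Ioc (s + h * k) (s + h * (k + 1))) := fun k τ hτ => (congrArg g (ceilGrid_eq hh hτ)).symm
  have hnonneg : ∀ k : ℕ, 0 ≤ s + h * k := fun k => by positivity
  have hadj := M.sum_pairing_adjacent hmono (m := m) (f := fun τ => g (ceilGrid s h τ))
    fun k _ => by simpa using (M.pairingIntegrable_const (hnonneg k) _).congr (hcell k)
  simp only [Nat.cast_zero, mul_zero, add_zero, Nat.cast_add, Nat.cast_one] at hadj
  rw [← hadj]
  refine Finset.sum_congr rfl fun k _ => ?_
  have hle : s + h * k ≤ s + h * (k + 1) := by linarith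
  rw [← M.pairing_congr (hcell k), M.pairing_const (hnonneg k) hle]

theorem tendsto_pairing (hs : 0 ≤ s) {F : ℕ → ℝ → Euc d} (hF : ∀ n, Measurable (F n)) {C : ℝ}
    (hbound : ∀ n, ∀ τ ∈ Ioc s t, ‖F n τ‖ ≤ C)
    (hlim : ∀ τ ∈ Ioc s t, Tendsto (fun n => F n τ) atTop (𝓝 (f τ))) :
    Tendsto (fun n => M.pairing (F n) s t) atTop (𝓝 (M.pairing f s t)) := by
  have hdom : ∀ μ : Measure ℝ, μ (Ioc s t) ≠ ⊤ → ∀ i, Tendsto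
      (fun n => ∫ τ in Ioc s t, F n τ i ∂μ) atTop (𝓝 (∫ τ in Ioc s t, f τ i ∂μ)) := by
    intro μ hμ i
    refine tendsto_integral_of_dominated_convergence (fun _ => C)
      (fun n => ((EuclideanSpace.proj (𝕜 := ℝ) i).continuous.measurable.comp
        (hF n)).aestronglyMeasurable) (integrableOn_const hμ) (fun n => ?_) ?_
    all_goals filter_upwards [ae_restrict_mem measurableSet_Ioc] with τ hτ
    · exact (PiLp.norm_apply_le _ i).trans (hbound n τ hτ)
    · exact ((EuclideanSpace.proj i).continuous.tendsto _).comp (hlim τ hτ)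
  exact tendsto_finsetSum _ fun i _ =>
    (hdom _ (M.pos_Ioc_ne_top hs i) i).sub (hdom _ (M.neg_Ioc_ne_top hs i) i)

theorem norm_sub_sq_le_two_mul_pairing (hs : 0 ≤ s) (hst : s ≤ t)
    (hrc : ∀ τ ∈ Ioc s t, ContinuousWithinAt φ (Ici τ) τ) (hbdd : IsBounded (φ '' Icc s t)) :
    ‖φ t - φ s‖ ^ 2 ≤ 2 * M.pairing (fun τ => φ τ - φ s) s t := by
  rcases hst.eq_or_lt with rfl | hlt
  · simp [pairing]
  obtain ⟨C, hC⟩ := isBounded_iff_forall_norm_le.1 hbdd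
  have hφC : ∀ τ ∈ Icc s t, ‖φ τ - φ s‖ ≤ C + C := fun τ hτ =>
    (norm_sub_le _ _).trans (add_le_add (hC _ (mem_image_of_mem φ hτ))
      (hC _ (mem_image_of_mem φ (left_mem_Icc.2 hst))))
  set h : ℕ → ℝ := fun n => (t - s) / (n + 1) with h_def
  have hh : Tendsto h atTop (𝓝[>] 0) := tendsto_div_add_one_nhdsGT (sub_pos.2 hlt)
  have hpos : ∀ n, 0 < h n := fun n => div_pos (sub_pos.2 hlt) n.cast_add_one_pos
  have hgrid : ∀ n : ℕ, s + h n * (n + 1) = t := fun n => by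
    rw [h_def, div_mul_cancel₀ _ n.cast_add_one_ne_zero]
    ring
  have hriemann : ∀ n, ‖φ t - φ s‖ ^ 2 ≤
      2 * M.pairing (fun τ => φ (ceilGrid s (h n) τ) - φ s) s t := fun n => by
    have hsum := norm_sq_sub_norm_sq_le_two_mul_sum_inner (fun k => φ (s + h n * k) - φ s) (n + 1)
    have hcomp := M.pairing_comp_ceilGrid hs (hpos n) (fun u => φ u - φ s) (n + 1)
    simp only [Nat.cast_zero, mul_zero, add_zero, sub_self, norm_zero, sub_sub_sub_cancel_right,
      Nat.cast_add_one, hgrid, ne_eq, OfNat.ofNat_ne_zero, not_false_eq_true, zero_pow,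
      sub_zero] at hsum hcomp
    rwa [hcomp]
  have hlim : Tendsto (fun n => M.pairing (fun τ => φ (ceilGrid s (h n) τ) - φ s) s t) atTop
      (𝓝 (M.pairing (fun τ => φ τ - φ s) s t)) := by
    refine M.tendsto_pairing hs (C := C + C)
      (fun n => measurable_comp_ceilGrid (fun u => φ u - φ s) s (h n)) (fun n τ hτ => hφC _ ?_)
      fun τ hτ => ((hrc τ hτ).sub continuousWithinAt_const).tendsto.comp (tendsto_ceilGrid hh s τ)
    refine ⟨hτ.1.le.trans (le_ceilGrid (hpos n)), ?_⟩
    have := ceilGrid_le (m := n + 1) (hpos n) (τ := τ) (by rw [Nat.cast_add_one, hgrid]; exact hτ.2)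
    rwa [Nat.cast_add_one, hgrid] at this
  exact ge_of_tendsto' (hlim.const_mul 2) hriemann

end BVMeasureData

theorem IsSkorohodSolution.pairing_increment_eq {d : ℕ} {D : Set (Euc d)} {w X φ : ℝ → Euc d}
    {M : BVMeasureData d φ} (hsol : IsSkorohodSolution D w X φ M) {s t : ℝ} (hs : 0 ≤ s)
    (hst : s ≤ t) :
    M.pairing (fun τ => w t - w τ) s t =
      M.pairing (fun τ => X s - X τ) s t + ⟪w t - w s, φ t - φ s⟫ +
        M.pairing (fun τ => φ τ - φ s) s t := by
  have hX := M.pairingIntegrable_of_rightCont_of_leftLim hsol.rightCont hsol.leftLim hs (t := t)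
  have hφ := M.pairingIntegrable_of_rightCont_of_leftLim hsol.assoc.rightCont hsol.assoc.leftLim
    hs (t := t)
  have hdecomp : EqOn (fun τ => w t - w τ)
      (fun τ => (X s - X τ) + (w t - w s) + (φ τ - φ s)) (Ioc s t) := fun τ hτ => by
    simp only [hsol.eqn s hs, hsol.eqn τ (hs.trans hτ.1.le)]
    abel
  have hXs := (M.pairingIntegrable_const hs (X s)).sub hX
  rw [M.pairing_congr hdecomp, M.pairing_add (hXs.add (M.pairingIntegrable_const hs _))
    (hφ.sub (M.pairingIntegrable_const hs _)), M.pairing_add hXs (M.pairingIntegrable_const hs _),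
    M.pairing_const hs hst]

theorem skorohod_increment_estimate_general {d : ℕ} (D : Set (Euc d))
    (w X φ : ℝ → Euc d)
    (M : BVMeasureData d φ)
    (hsol : IsSkorohodSolution D w X φ M) :
    ∀ s t : ℝ, 0 ≤ s → s ≤ t →
      ‖X t - X s‖ ^ 2 ≤ ‖w t - w s‖ ^ 2 +
        2 * M.pairing (fun τ => w t - w τ) s t := by
  intro s t hs hst
  have hnormal : 0 ≤ M.pairing (fun τ => X s - X τ) s t :=
    hsol.assoc.normal (fun _ => X s) continuous_const (fun _ _ => hsol.mem s hs) s t hs hst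
  have hquadratic : ‖φ t - φ s‖ ^ 2 ≤ 2 * M.pairing (fun τ => φ τ - φ s) s t :=
    M.norm_sub_sq_le_two_mul_pairing hs hst (fun τ hτ => hsol.assoc.rightCont τ (hs.trans hτ.1.le))
      (hsol.assoc.rightCont.isBounded_image_Icc hsol.assoc.leftLim hs)
  have hincrement : X t - X s = (w t - w s) + (φ t - φ s) := by
    rw [hsol.eqn t (hs.trans hst), hsol.eqn s hs]
    abel
  rw [hincrement, norm_add_sq_real, hsol.pairing_increment_eq hs hst]
  linarith

/-- **Lemma 4.1.2(ii).** If `(X, φ)` solves the Skorohod equation `X = w + φ` for a nonempty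
convex open `D ⊆ ℝ^d`, then for all `0 ≤ s ≤ t`,
`|X(t) − X(s)|² ≤ |w(t) − w(s)|² + 2∫_{(s,t]} ⟨w(t) − w(τ), dφ(τ)⟩`. -/
theorem skorohod_increment_estimate {d : ℕ} (D : Set (Euc d)) (hne : D.Nonempty)
    (hconv : Convex ℝ D) (hopen : IsOpen D)
    (w X φ : ℝ → Euc d)
    (hw_rc : RightContinuousOnNonneg w) (hw_ll : HasLeftLimitsOnPos w)
    (hw0 : w 0 ∈ closure D)
    (M : BVMeasureData d φ)
    (hsol : IsSkorohodSolution D w X φ M) :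
    ∀ s t : ℝ, 0 ≤ s → s ≤ t →
      ‖X t - X s‖ ^ 2 ≤ ‖w t - w s‖ ^ 2 +
        2 * M.pairing (fun τ => w t - w τ) s t :=
  skorohod_increment_estimate_general D w X φ M hsol

end
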